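/- arXiv:2406.17690 — 6 statements merged into one kernel-verified Lean document; each statement's English description precedes it below -/
import Mathlib

section
/- For real constants b₁, b₂, the functions ψ(x,t) = e^{−t}·cos(e^{−t}x)·(e^{−(b₁+1)e^{−t}sinh t} + e^{−(b₂+1)e^{−t}sinh t}) and φ(x,t) = (b₁−b₂)·e^{−t}·cos(e^{−t}x)·e^{−(b₂+1)e^{−t}sinh t} satisfy the variable-coefficient system ψ_t = ψ_{xx} − ψ − b₁e^{−2t}ψ − xψ_x + e^{−2t}φ and φ_t = φ_{xx} − φ − b₂e^{−2t}φ − xφ_x for all (x,t) ∈ ℝ². -/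
/-!
The profile `u = e^{-t} cos (e^{-t} x)` satisfies `u_t = u_xx - u - x u_x + e^{-2t} u`, and since
`e^{-t} sinh t = (1 - e^{-2t}) / 2` the damping factor `g_b = exp (-(b + 1) e^{-t} sinh t)` satisfies
`g_b' = -(b + 1) e^{-2t} g_b`. Hence `u g_b` solves `w_t = w_xx - w - b e^{-2t} w - x w_x`, and
`ψ = u (g_{b₁} + g_{b₂})`, `φ = (b₁ - b₂) u g_{b₂}` solve the system by linearity.
-/

open Real

noncomputable section

def profile (x t : ℝ) : ℝ := exp (-t) * cos (exp (-t) * x)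

def damping (b t : ℝ) : ℝ := exp (-(b + 1) * exp (-t) * sinh t)

lemma exp_neg_two_mul_eq (t : ℝ) : exp (-2 * t) = exp (-t) * exp (-t) := by
  rw [← exp_add]; ring_nf

lemma hasDerivAt_profile_space (x t : ℝ) :
    HasDerivAt (fun y => profile y t) (-exp (-2 * t) * sin (exp (-t) * x)) x := by
  refine ((((hasDerivAt_id' x).const_mul (exp (-t))).cos).const_mul (exp (-t))).congr_deriv ?_
  rw [exp_neg_two_mul_eq]; ring

lemma hasDerivAt_neg_sin_space (x t : ℝ) :
    HasDerivAt (fun y => -exp (-2 * t) * sin (exp (-t) * y)) (-exp (-2 * t) * profile x t) x := by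
  refine ((((hasDerivAt_id' x).const_mul (exp (-t))).sin).const_mul (-exp (-2 * t))).congr_deriv ?_
  rw [profile]; ring

lemma hasDerivAt_profile_time (x t : ℝ) :
    HasDerivAt (profile x) (-profile x t + x * exp (-2 * t) * sin (exp (-t) * x)) t := by
  have hE : HasDerivAt (fun s => exp (-s)) (exp (-t) * (-1)) t := (hasDerivAt_neg' t).exp
  refine (hE.mul (hE.mul_const x).cos).congr_deriv ?_
  rw [exp_neg_two_mul_eq, profile]; ring

lemma hasDerivAt_const_mul_exp_neg_mul_sinh (c t : ℝ) :
    HasDerivAt (fun s => c * exp (-s) * sinh s) (c * exp (-2 * t)) t := by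
  refine ((((hasDerivAt_neg' t).exp).const_mul c).mul (hasDerivAt_sinh t)).congr_deriv ?_
  rw [exp_neg_two_mul_eq, ← cosh_sub_sinh]; ring

lemma hasDerivAt_damping (b t : ℝ) :
    HasDerivAt (damping b) (-(b + 1) * exp (-2 * t) * damping b t) t := by
  refine (hasDerivAt_const_mul_exp_neg_mul_sinh (-(b + 1)) t).exp.congr_deriv ?_
  rw [damping]; ring

lemma deriv_profile_mul {K : ℝ → ℝ} {K' t : ℝ} (hK : HasDerivAt K K' t) (x : ℝ) :
    deriv (fun s => profile x s * K s) t =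
      deriv (fun y => deriv (fun z => profile z t * K t) y) x - profile x t * K t
        - x * deriv (fun y => profile y t * K t) x
        + profile x t * (exp (-2 * t) * K t + K') := by
  have hx : (fun y => deriv (fun z => profile z t * K t) y) =
      fun y => -exp (-2 * t) * sin (exp (-t) * y) * K t :=
    funext fun y => ((hasDerivAt_profile_space y t).mul_const (K t)).deriv
  have ht : HasDerivAt (fun s => profile x s * K s) _ t := (hasDerivAt_profile_time x t).mul hK
  rw [ht.deriv, hx,
    ((hasDerivAt_neg_sin_space x t).mul_const (K t)).deriv,
    ((hasDerivAt_profile_space x t).mul_const (K t)).deriv]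
  ring

end

theorem stmt2 (b₁ b₂ : ℝ)
    (ψ φ : ℝ → ℝ → ℝ)
    (hψ : ψ = fun x t => Real.exp (-t) * Real.cos (Real.exp (-t) * x) *
      (Real.exp (-(b₁ + 1) * Real.exp (-t) * Real.sinh t) +
       Real.exp (-(b₂ + 1) * Real.exp (-t) * Real.sinh t)))
    (hφ : φ = fun x t => (b₁ - b₂) * Real.exp (-t) * Real.cos (Real.exp (-t) * x) *
      Real.exp (-(b₂ + 1) * Real.exp (-t) * Real.sinh t)) :
    (∀ x t : ℝ, deriv (ψ x) t =
      deriv (fun y => deriv (fun z => ψ z t) y) x - ψ x t - b₁ * Real.exp (-2 * t) * ψ x t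
        - x * deriv (fun y => ψ y t) x + Real.exp (-2 * t) * φ x t) ∧
    (∀ x t : ℝ, deriv (φ x) t =
      deriv (fun y => deriv (fun z => φ z t) y) x - φ x t - b₂ * Real.exp (-2 * t) * φ x t
        - x * deriv (fun y => φ y t) x) := by
  have hψ' : ψ = fun x t => profile x t * (damping b₁ t + damping b₂ t) := hψ
  have hφ' : φ = fun x t => profile x t * ((b₁ - b₂) * damping b₂ t) := by
    rw [hφ]; funext x t; simp only [profile, damping]; ring
  rw [hψ', hφ']
  refine ⟨fun x t => ?_, fun x t => ?_⟩
  · have hK : HasDerivAt (fun s => damping b₁ s + damping b₂ s) _ t :=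
      (hasDerivAt_damping b₁ t).add (hasDerivAt_damping b₂ t)
    rw [deriv_profile_mul hK x]
    ring
  · have hK : HasDerivAt (fun s => (b₁ - b₂) * damping b₂ s) _ t :=
      (hasDerivAt_damping b₂ t).const_mul (b₁ - b₂)
    rw [deriv_profile_mul hK x]
    ring
end

section
/- Suppose ψ(x,t) = μ(t)^{-1/2}·e^{α(t)x² + δ(t)x + κ(t)}·u(β(t)x + ε(t), γ(t)) and φ(x,t) = μ(t)^{-1/2}·e^{α(t)x² + δ(t)x + κ(t)}·v(β(t)x + ε(t), γ(t)), where μ > 0, the functions α, β, γ, δ, ε, κ satisfy the Riccati system dα/dt + b = 2cα + 4aα², dβ/dt = (c+4aα)β, dγ/dt = aβ², dδ/dt + 2αg = (c+4aα)δ + f, dε/dt = (2aδ−g)β, dκ/dt = aδ² − gδ, together with μ'/μ = −4aα − 2d, and u, v satisfy u_τ = u_{ξξ} − b₁u + v and v_τ = v_{ξξ} − b₂v. Then with h(t) = a(t)β(t)² and L_i(t) = −b_i·a(t)β(t)² (i = 1,2), the pair (ψ, φ) satisfies ψ_t = aψ_{xx} − (bx² − d − L₁ − xf)ψ − (g − cx)ψ_x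 + hφ and φ_t = aφ_{xx} − (bx² − d − L₂ − xf)φ − (g − cx)φ_x. -/
noncomputable def pd1 (F : ℝ × ℝ → ℝ) (z : ℝ × ℝ) : ℝ := fderiv ℝ F z (1, 0)
noncomputable def pd2 (F : ℝ × ℝ → ℝ) (z : ℝ × ℝ) : ℝ := fderiv ℝ F z (0, 1)

lemma pd1_hasDerivAt {F : ℝ × ℝ → ℝ} (hF : ContDiff ℝ (⊤ : ℕ∞) F) (x y : ℝ) :
    HasDerivAt (fun s => F (s, y)) (pd1 F (x, y)) x := by
  have h1 : HasFDerivAt F (fderiv ℝ F (x, y)) (x, y) :=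
    (hF.differentiable (by simp) (x, y)).hasFDerivAt
  have h2 : HasDerivAt (fun s : ℝ => (s, y)) ((1 : ℝ), (0 : ℝ)) x :=
    (hasDerivAt_id x).prodMk (hasDerivAt_const x y)
  exact h1.comp_hasDerivAt x h2

lemma pd2_hasDerivAt {F : ℝ × ℝ → ℝ} (hF : ContDiff ℝ (⊤ : ℕ∞) F) (x y : ℝ) :
    HasDerivAt (fun s => F (x, s)) (pd2 F (x, y)) y := by
  have h1 : HasFDerivAt F (fderiv ℝ F (x, y)) (x, y) :=
    (hF.differentiable (by simp) (x, y)).hasFDerivAt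
  have h2 : HasDerivAt (fun s : ℝ => (x, s)) ((0 : ℝ), (1 : ℝ)) y :=
    (hasDerivAt_const y x).prodMk (hasDerivAt_id y)
  exact h1.comp_hasDerivAt y h2

lemma pd1_contDiff {F : ℝ × ℝ → ℝ} (hF : ContDiff ℝ (⊤ : ℕ∞) F) : ContDiff ℝ (⊤ : ℕ∞) (pd1 F) :=
  (hF.fderiv_right (by simp)).clm_apply contDiff_const

lemma curve_hasDerivAt {F : ℝ × ℝ → ℝ} (hF : ContDiff ℝ (⊤ : ℕ∞) F)
    {p q : ℝ → ℝ} {p' q' t : ℝ} (hp : HasDerivAt p p' t) (hq : HasDerivAt q q' t) :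
    HasDerivAt (fun s => F (p s, q s))
      (p' * pd1 F (p t, q t) + q' * pd2 F (p t, q t)) t := by
  have h1 : HasFDerivAt F (fderiv ℝ F (p t, q t)) (p t, q t) :=
    (hF.differentiable (by simp) _).hasFDerivAt
  have h2 : HasDerivAt (fun s : ℝ => (p s, q s)) (p', q') t := hp.prodMk hq
  have h3 := h1.comp_hasDerivAt t h2
  have hval : (fderiv ℝ F (p t, q t)) (p', q')
      = p' * pd1 F (p t, q t) + q' * pd2 F (p t, q t) := by
    have hv : ((p', q') : ℝ × ℝ) = p' • ((1 : ℝ), (0 : ℝ)) + q' • ((0 : ℝ), (1 : ℝ)) := by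
      simp [Prod.ext_iff]
    rw [hv, map_add, map_smul, map_smul, smul_eq_mul, smul_eq_mul]
    rfl
  rw [← hval]
  exact h3

lemma key (a b c d f g α β γ δ ε κ μ : ℝ → ℝ) (b₀ : ℝ) (w r : ℝ → ℝ → ℝ)
    (hμpos : ∀ t, 0 < μ t)
    (hαs : ContDiff ℝ (⊤ : ℕ∞) α) (hβs : ContDiff ℝ (⊤ : ℕ∞) β) (hγs : ContDiff ℝ (⊤ : ℕ∞) γ)
    (hδs : ContDiff ℝ (⊤ : ℕ∞) δ) (hεs : ContDiff ℝ (⊤ : ℕ∞) ε) (hκs : ContDiff ℝ (⊤ : ℕ∞) κ)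
    (hμs : ContDiff ℝ (⊤ : ℕ∞) μ) (hws : ContDiff ℝ (⊤ : ℕ∞) (Function.uncurry w))
    (hα : ∀ t, deriv α t + b t = 2 * c t * α t + 4 * a t * (α t) ^ 2)
    (hβ : ∀ t, deriv β t = (c t + 4 * a t * α t) * β t)
    (hγ : ∀ t, deriv γ t = a t * (β t) ^ 2)
    (hδ : ∀ t, deriv δ t + 2 * α t * g t = (c t + 4 * a t * α t) * δ t + f t)
    (hε : ∀ t, deriv ε t = (2 * a t * δ t - g t) * β t)
    (hκ : ∀ t, deriv κ t = a t * (δ t) ^ 2 - g t * δ t)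
    (hμ : ∀ t, deriv μ t / μ t = -(4 * a t * α t) - 2 * d t)
    (hw : ∀ ξ τ : ℝ, deriv (w ξ) τ =
      deriv (fun y => deriv (fun z => w z τ) y) ξ - b₀ * w ξ τ + r ξ τ)
    (x t : ℝ) :
    deriv (fun s => (μ s) ^ (-(1 : ℝ) / 2) *
        Real.exp (α s * x ^ 2 + δ s * x + κ s) * w (β s * x + ε s) (γ s)) t =
      a t * deriv (fun y => deriv (fun z => (μ t) ^ (-(1 : ℝ) / 2) *
          Real.exp (α t * z ^ 2 + δ t * z + κ t) * w (β t * z + ε t) (γ t)) y) x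
        - (b t * x ^ 2 - d t - (-b₀ * a t * (β t) ^ 2) - x * f t) *
            ((μ t) ^ (-(1 : ℝ) / 2) * Real.exp (α t * x ^ 2 + δ t * x + κ t) *
              w (β t * x + ε t) (γ t))
        - (g t - c t * x) * deriv (fun y => (μ t) ^ (-(1 : ℝ) / 2) *
            Real.exp (α t * y ^ 2 + δ t * y + κ t) * w (β t * y + ε t) (γ t)) x
        + (a t * (β t) ^ 2) * ((μ t) ^ (-(1 : ℝ) / 2) *
            Real.exp (α t * x ^ 2 + δ t * x + κ t) * r (β t * x + ε t) (γ t)) := by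
  have hμne : μ t ≠ 0 := ne_of_gt (hμpos t)
  have hαd : HasDerivAt α (deriv α t) t := (hαs.differentiable (by simp) t).hasDerivAt
  have hβd : HasDerivAt β (deriv β t) t := (hβs.differentiable (by simp) t).hasDerivAt
  have hγd : HasDerivAt γ (deriv γ t) t := (hγs.differentiable (by simp) t).hasDerivAt
  have hδd : HasDerivAt δ (deriv δ t) t := (hδs.differentiable (by simp) t).hasDerivAt
  have hεd : HasDerivAt ε (deriv ε t) t := (hεs.differentiable (by simp) t).hasDerivAt
  have hκd : HasDerivAt κ (deriv κ t) t := (hκs.differentiable (by simp) t).hasDerivAt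
  have hμd : HasDerivAt μ (deriv μ t) t := (hμs.differentiable (by simp) t).hasDerivAt
  have hμ' : deriv μ t = (-(4 * a t * α t) - 2 * d t) * μ t := by
    have h := hμ t
    rw [div_eq_iff hμne] at h
    exact h
  have hpow : μ t ^ (-(1 : ℝ) / 2 - 1) * μ t = μ t ^ (-(1 : ℝ) / 2) := by
    rw [← Real.rpow_add_one hμne]
    norm_num
  -- time derivative of μ^(-1/2)
  have hM : HasDerivAt (fun s => (μ s) ^ (-(1 : ℝ) / 2))
      ((2 * a t * α t + d t) * (μ t) ^ (-(1 : ℝ) / 2)) t := by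
    have h0 := hμd.rpow_const (p := -(1 : ℝ) / 2) (Or.inl hμne)
    convert h0 using 1
    rw [hμ', ← hpow]
    ring
  -- time derivative of the exponential factor
  have hEt : HasDerivAt (fun s => Real.exp (α s * x ^ 2 + δ s * x + κ s))
      (Real.exp (α t * x ^ 2 + δ t * x + κ t) *
        (deriv α t * x ^ 2 + deriv δ t * x + deriv κ t)) t :=
    (((hαd.mul_const (x ^ 2)).add (hδd.mul_const x)).add hκd).exp
  -- time derivative of the w factor
  have hWt : HasDerivAt (fun s => w (β s * x + ε s) (γ s))
      ((deriv β t * x + deriv ε t) * pd1 (Function.uncurry w) (β t * x + ε t, γ t)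
        + deriv γ t * pd2 (Function.uncurry w) (β t * x + ε t, γ t)) t := by
    have hp : HasDerivAt (fun s => β s * x + ε s) (deriv β t * x + deriv ε t) t :=
      (hβd.mul_const x).add hεd
    exact curve_hasDerivAt hws hp hγd
  have hLHS : HasDerivAt (fun s => (μ s) ^ (-(1 : ℝ) / 2) *
      Real.exp (α s * x ^ 2 + δ s * x + κ s) * w (β s * x + ε s) (γ s))
      ((((2 * a t * α t + d t) * (μ t) ^ (-(1 : ℝ) / 2)) * Real.exp (α t * x ^ 2 + δ t * x + κ t)
        + (μ t) ^ (-(1 : ℝ) / 2) * (Real.exp (α t * x ^ 2 + δ t * x + κ t) *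
          (deriv α t * x ^ 2 + deriv δ t * x + deriv κ t))) * w (β t * x + ε t) (γ t)
        + ((μ t) ^ (-(1 : ℝ) / 2) * Real.exp (α t * x ^ 2 + δ t * x + κ t)) *
          ((deriv β t * x + deriv ε t) * pd1 (Function.uncurry w) (β t * x + ε t, γ t)
            + deriv γ t * pd2 (Function.uncurry w) (β t * x + ε t, γ t))) t := (hM.mul hEt).mul hWt
  -- spatial derivative (at arbitrary point z)
  have hX : ∀ z : ℝ, HasDerivAt
      (fun y => (μ t) ^ (-(1 : ℝ) / 2) *
        Real.exp (α t * y ^ 2 + δ t * y + κ t) * w (β t * y + ε t) (γ t))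
      ((μ t) ^ (-(1 : ℝ) / 2) * (Real.exp (α t * z ^ 2 + δ t * z + κ t) *
        ((2 * α t * z + δ t) * w (β t * z + ε t) (γ t)
          + β t * pd1 (Function.uncurry w) (β t * z + ε t, γ t)))) z := by
    intro z
    have hG : HasDerivAt (fun y : ℝ => α t * y ^ 2 + δ t * y + κ t) (2 * α t * z + δ t) z := by
      have h1 : HasDerivAt (fun y : ℝ => y ^ 2) (2 * z) z := by
        simpa using hasDerivAt_pow 2 z
      have : HasDerivAt (fun y : ℝ => α t * y ^ 2 + δ t * y + κ t) _ z :=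
        ((h1.const_mul (α t)).add ((hasDerivAt_id z).const_mul (δ t))).add_const (κ t)
      convert this using 1
      ring
    have hp : HasDerivAt (fun y => β t * y + ε t) (β t) z := by
      have := ((hasDerivAt_id z).const_mul (β t)).add_const (ε t)
      simpa using this
    have hwx : HasDerivAt (fun y => w (β t * y + ε t) (γ t))
        (β t * pd1 (Function.uncurry w) (β t * z + ε t, γ t)) z := by
      have := curve_hasDerivAt hws hp (hasDerivAt_const z (γ t))
      simpa using this
    have hE : HasDerivAt (fun y => (μ t) ^ (-(1 : ℝ) / 2) *
        Real.exp (α t * y ^ 2 + δ t * y + κ t))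
        ((μ t) ^ (-(1 : ℝ) / 2) * (Real.exp (α t * z ^ 2 + δ t * z + κ t) * (2 * α t * z + δ t))) z :=
      hG.exp.const_mul _
    have : HasDerivAt (fun y => (μ t) ^ (-(1 : ℝ) / 2) *
        Real.exp (α t * y ^ 2 + δ t * y + κ t) * w (β t * y + ε t) (γ t)) _ z := hE.mul hwx
    convert this using 1
    ring
  have hfirstfun : (deriv (fun z => (μ t) ^ (-(1 : ℝ) / 2) *
        Real.exp (α t * z ^ 2 + δ t * z + κ t) * w (β t * z + ε t) (γ t)))
      = fun z => (μ t) ^ (-(1 : ℝ) / 2) * (Real.exp (α t * z ^ 2 + δ t * z + κ t) *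
        ((2 * α t * z + δ t) * w (β t * z + ε t) (γ t)
          + β t * pd1 (Function.uncurry w) (β t * z + ε t, γ t))) :=
    funext fun z => (hX z).deriv
  have hfirst_at_x := (hX x).deriv
  -- second spatial derivative
  have hsecond : deriv (fun y => deriv (fun z => (μ t) ^ (-(1 : ℝ) / 2) *
        Real.exp (α t * z ^ 2 + δ t * z + κ t) * w (β t * z + ε t) (γ t)) y) x
      = (μ t) ^ (-(1 : ℝ) / 2) * (Real.exp (α t * x ^ 2 + δ t * x + κ t) *
          ((2 * α t * x + δ t) *
            ((2 * α t * x + δ t) * w (β t * x + ε t) (γ t)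
              + β t * pd1 (Function.uncurry w) (β t * x + ε t, γ t))
          + (2 * α t * w (β t * x + ε t) (γ t)
              + (2 * α t * x + δ t) * (β t * pd1 (Function.uncurry w) (β t * x + ε t, γ t))
              + β t * (β t * pd1 (pd1 (Function.uncurry w)) (β t * x + ε t, γ t))))) := by
    rw [hfirstfun]
    have hG : HasDerivAt (fun y : ℝ => α t * y ^ 2 + δ t * y + κ t) (2 * α t * x + δ t) x := by
      have h1 : HasDerivAt (fun y : ℝ => y ^ 2) (2 * x) x := by
        simpa using hasDerivAt_pow 2 x
      have : HasDerivAt (fun y : ℝ => α t * y ^ 2 + δ t * y + κ t) _ x :=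
        ((h1.const_mul (α t)).add ((hasDerivAt_id x).const_mul (δ t))).add_const (κ t)
      convert this using 1
      ring
    have hp : HasDerivAt (fun y => β t * y + ε t) (β t) x := by
      have := ((hasDerivAt_id x).const_mul (β t)).add_const (ε t)
      simpa using this
    have hwx : HasDerivAt (fun y => w (β t * y + ε t) (γ t))
        (β t * pd1 (Function.uncurry w) (β t * x + ε t, γ t)) x := by
      have := curve_hasDerivAt hws hp (hasDerivAt_const x (γ t))
      simpa using this
    have hlin : HasDerivAt (fun z : ℝ => 2 * α t * z + δ t) (2 * α t) x := by
      have := ((hasDerivAt_id x).const_mul (2 * α t)).add_const (δ t)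
      simpa using this
    have hpd1x : HasDerivAt (fun z => pd1 (Function.uncurry w) (β t * z + ε t, γ t))
        (β t * pd1 (pd1 (Function.uncurry w)) (β t * x + ε t, γ t)) x := by
      have := curve_hasDerivAt (pd1_contDiff hws) hp (hasDerivAt_const x (γ t))
      simpa using this
    have hH : HasDerivAt (fun z => (2 * α t * z + δ t) * w (β t * z + ε t) (γ t)
        + β t * pd1 (Function.uncurry w) (β t * z + ε t, γ t))
        (2 * α t * w (β t * x + ε t) (γ t)
          + (2 * α t * x + δ t) * (β t * pd1 (Function.uncurry w) (β t * x + ε t, γ t))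
          + β t * (β t * pd1 (pd1 (Function.uncurry w)) (β t * x + ε t, γ t))) x := by
      exact (hlin.mul hwx).add (hpd1x.const_mul (β t))
    have hD : HasDerivAt (fun y => (μ t) ^ (-(1 : ℝ) / 2) * (Real.exp (α t * y ^ 2 + δ t * y + κ t) *
        ((2 * α t * y + δ t) * w (β t * y + ε t) (γ t)
          + β t * pd1 (Function.uncurry w) (β t * y + ε t, γ t)))) _ x :=
      (hG.exp.mul hH).const_mul ((μ t) ^ (-(1 : ℝ) / 2))
    beta_reduce
    rw [hD.deriv]
    ring
  -- the PDE for w expressed through partial derivatives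
  have hWrel : pd2 (Function.uncurry w) (β t * x + ε t, γ t)
      = pd1 (pd1 (Function.uncurry w)) (β t * x + ε t, γ t)
        - b₀ * w (β t * x + ε t) (γ t) + r (β t * x + ε t) (γ t) := by
    have e1 : deriv (w (β t * x + ε t)) (γ t)
        = pd2 (Function.uncurry w) (β t * x + ε t, γ t) :=
      (pd2_hasDerivAt hws (β t * x + ε t) (γ t)).deriv
    have e2 : (fun y => deriv (fun z => w z (γ t)) y)
        = fun y => pd1 (Function.uncurry w) (y, γ t) :=
      funext fun y => (pd1_hasDerivAt hws y (γ t)).deriv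
    have e3 : deriv (fun y => deriv (fun z => w z (γ t)) y) (β t * x + ε t)
        = pd1 (pd1 (Function.uncurry w)) (β t * x + ε t, γ t) := by
      rw [e2]
      exact (pd1_hasDerivAt (pd1_contDiff hws) (β t * x + ε t) (γ t)).deriv
    have h := hw (β t * x + ε t) (γ t)
    rw [e1, e3] at h
    exact h
  have hα2 : deriv α t = 2 * c t * α t + 4 * a t * (α t) ^ 2 - b t := by
    have := hα t; linarith
  have hδ2 : deriv δ t = (c t + 4 * a t * α t) * δ t + f t - 2 * α t * g t := by
    have := hδ t; linarith
  rw [hLHS.deriv, hsecond, hfirst_at_x, hWrel, hγ t, hβ t, hε t, hκ t, hα2, hδ2]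
  ring

theorem stmt3
    (a b c d f g α β γ δ ε κ μ : ℝ → ℝ) (b₁ b₂ : ℝ) (u v ψ φ : ℝ → ℝ → ℝ)
    (hμpos : ∀ t, 0 < μ t)
    (hsmooth : ContDiff ℝ (⊤ : ℕ∞) α ∧ ContDiff ℝ (⊤ : ℕ∞) β ∧ ContDiff ℝ (⊤ : ℕ∞) γ ∧ ContDiff ℝ (⊤ : ℕ∞) δ ∧
      ContDiff ℝ (⊤ : ℕ∞) ε ∧ ContDiff ℝ (⊤ : ℕ∞) κ ∧ ContDiff ℝ (⊤ : ℕ∞) μ ∧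
      ContDiff ℝ (⊤ : ℕ∞) (Function.uncurry u) ∧ ContDiff ℝ (⊤ : ℕ∞) (Function.uncurry v))
    (hα : ∀ t, deriv α t + b t = 2 * c t * α t + 4 * a t * (α t) ^ 2)
    (hβ : ∀ t, deriv β t = (c t + 4 * a t * α t) * β t)
    (hγ : ∀ t, deriv γ t = a t * (β t) ^ 2)
    (hδ : ∀ t, deriv δ t + 2 * α t * g t = (c t + 4 * a t * α t) * δ t + f t)
    (hε : ∀ t, deriv ε t = (2 * a t * δ t - g t) * β t)
    (hκ : ∀ t, deriv κ t = a t * (δ t) ^ 2 - g t * δ t)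
    (hμ : ∀ t, deriv μ t / μ t = -(4 * a t * α t) - 2 * d t)
    (hu : ∀ ξ τ : ℝ, deriv (u ξ) τ =
      deriv (fun y => deriv (fun z => u z τ) y) ξ - b₁ * u ξ τ + v ξ τ)
    (hv : ∀ ξ τ : ℝ, deriv (v ξ) τ =
      deriv (fun y => deriv (fun z => v z τ) y) ξ - b₂ * v ξ τ)
    (hψ : ψ = fun x t => (μ t) ^ (-(1 : ℝ) / 2) *
      Real.exp (α t * x ^ 2 + δ t * x + κ t) * u (β t * x + ε t) (γ t))
    (hφ : φ = fun x t => (μ t) ^ (-(1 : ℝ) / 2) *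
      Real.exp (α t * x ^ 2 + δ t * x + κ t) * v (β t * x + ε t) (γ t)) :
    (∀ x t : ℝ, deriv (ψ x) t =
      a t * deriv (fun y => deriv (fun z => ψ z t) y) x
        - (b t * x ^ 2 - d t - (-b₁ * a t * (β t) ^ 2) - x * f t) * ψ x t
        - (g t - c t * x) * deriv (fun y => ψ y t) x
        + (a t * (β t) ^ 2) * φ x t) ∧
    (∀ x t : ℝ, deriv (φ x) t =
      a t * deriv (fun y => deriv (fun z => φ z t) y) x
        - (b t * x ^ 2 - d t - (-b₂ * a t * (β t) ^ 2) - x * f t) * φ x t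
        - (g t - c t * x) * deriv (fun y => φ y t) x) := by
  obtain ⟨hαs, hβs, hγs, hδs, hεs, hκs, hμs, hus, hvs⟩ := hsmooth
  subst hψ hφ
  constructor
  · intro x t
    exact key a b c d f g α β γ δ ε κ μ b₁ u v hμpos hαs hβs hγs hδs hεs hκs hμs hus
      hα hβ hγ hδ hε hκ hμ hu x t
  · intro x t
    have h := key a b c d f g α β γ δ ε κ μ b₂ v (fun _ _ => 0) hμpos hαs hβs hγs hδs hεs hκs hμs hvs
      hα hβ hγ hδ hε hκ hμ (fun ξ τ => by simpa using hv ξ τ) x t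
    simp only [mul_zero, add_zero] at h
    exact h
end

section
/- Suppose ψ(x,t) = μ(t)^{-1/2}·e^{S(x,t)}·u(β(t)x + ε(t), γ(t)) and φ(x,t) = μ(t)^{-1/2}·e^{S(x,t)}·v(β(t)x + ε(t), γ(t)) with S(x,t) = α(t)x² + δ(t)x + κ(t), where α, β, γ, δ, ε, κ, μ satisfy the Riccati system (as in context) and u, v satisfy the Lotka-Volterra system u_τ = u_{ξξ} + u(a₁ − b₁u − c₁v), v_τ = v_{ξξ} + v(a₂ − b₂u − c₂v). Then with L_i(t) = a_i·a(t)β(t)², h_i(x,t) = −b_i·a(t)β(t)²·μ(t)^{1/2}·e^{−S(x,t)}, r_i(x,t) = −c_i·a(t)β(t)²·μ(t)^{1/2}·e^{−S(x,t)} (i=1,2), the pair (ψ,φ) satisfies ψ_t = aψ_{xx} − (bx² − d − L₁ − xf)ψ − (g − cx)ψ_x + (h₁ψ + r₁φ)ψ and φ_t = aφ_{xx} − (bx² − d − L₂ − xf)φ − (g − cx)φ_x + (h₂ψ + r₂φ)φ. -/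
lemma key6 (a b c d f g α β γ δ ε κ μ : ℝ → ℝ) (u P : ℝ → ℝ → ℝ)
    (hμpos : ∀ t, 0 < μ t)
    (hαs : ContDiff ℝ (⊤ : ℕ∞) α) (hβs : ContDiff ℝ (⊤ : ℕ∞) β) (hγs : ContDiff ℝ (⊤ : ℕ∞) γ)
    (hδs : ContDiff ℝ (⊤ : ℕ∞) δ) (hεs : ContDiff ℝ (⊤ : ℕ∞) ε) (hκs : ContDiff ℝ (⊤ : ℕ∞) κ)
    (hμs : ContDiff ℝ (⊤ : ℕ∞) μ) (hus : ContDiff ℝ (⊤ : ℕ∞) (Function.uncurry u))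
    (hα : ∀ t, deriv α t + b t = 2 * c t * α t + 4 * a t * (α t) ^ 2)
    (hβ : ∀ t, deriv β t = (c t + 4 * a t * α t) * β t)
    (hγ : ∀ t, deriv γ t = a t * (β t) ^ 2)
    (hδ : ∀ t, deriv δ t + 2 * α t * g t = (c t + 4 * a t * α t) * δ t + f t)
    (hε : ∀ t, deriv ε t = (2 * a t * δ t - g t) * β t)
    (hκ : ∀ t, deriv κ t = a t * (δ t) ^ 2 - g t * δ t)
    (hμ : ∀ t, deriv μ t / μ t = -(4 * a t * α t) - 2 * d t)
    (huP : ∀ ξ τ : ℝ, deriv (u ξ) τ =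
      deriv (fun y => deriv (fun z => u z τ) y) ξ + u ξ τ * P ξ τ)
    (x t : ℝ) :
    deriv (fun s => (μ s) ^ (-(1:ℝ)/2) *
        Real.exp (α s * x ^ 2 + δ s * x + κ s) * u (β s * x + ε s) (γ s)) t =
      a t * deriv (fun y => deriv (fun z => (μ t) ^ (-(1:ℝ)/2) *
          Real.exp (α t * z ^ 2 + δ t * z + κ t) * u (β t * z + ε t) (γ t)) y) x
        - (b t * x ^ 2 - d t - x * f t) * ((μ t) ^ (-(1:ℝ)/2) *
            Real.exp (α t * x ^ 2 + δ t * x + κ t) * u (β t * x + ε t) (γ t))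
        - (g t - c t * x) * deriv (fun y => (μ t) ^ (-(1:ℝ)/2) *
            Real.exp (α t * y ^ 2 + δ t * y + κ t) * u (β t * y + ε t) (γ t)) x
        + a t * (β t) ^ 2 * P (β t * x + ε t) (γ t) * ((μ t) ^ (-(1:ℝ)/2) *
            Real.exp (α t * x ^ 2 + δ t * x + κ t) * u (β t * x + ε t) (γ t)) := by
  have hdF : Differentiable ℝ (Function.uncurry u) := hus.differentiable (by simp)
  set u₁ : ℝ × ℝ → ℝ := fun p => fderiv ℝ (Function.uncurry u) p (1,0) with hu₁def
  set u₂ : ℝ × ℝ → ℝ := fun p => fderiv ℝ (Function.uncurry u) p (0,1) with hu₂def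
  have hu₁s : ContDiff ℝ (⊤ : ℕ∞) u₁ := (hus.fderiv_right (by simp)).clm_apply contDiff_const
  set u₁₁ : ℝ × ℝ → ℝ := fun p => fderiv ℝ u₁ p (1,0) with hu₁₁def
  have hlin : ∀ p : ℝ × ℝ, ∀ d1 d2 : ℝ,
      fderiv ℝ (Function.uncurry u) p (d1, d2) = d1 * u₁ p + d2 * u₂ p := by
    intro p d1 d2
    have h1 : ((d1, d2) : ℝ × ℝ) = d1 • ((1:ℝ),(0:ℝ)) + d2 • ((0:ℝ),(1:ℝ)) := by
      simp [Prod.ext_iff]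
    rw [h1, map_add, map_smul, map_smul, hu₁def, hu₂def]
    simp [smul_eq_mul]
  have hlin1 : ∀ p : ℝ × ℝ, ∀ d1 : ℝ, fderiv ℝ u₁ p (d1, (0:ℝ)) = d1 * u₁₁ p := by
    intro p d1
    have h1 : ((d1, (0:ℝ)) : ℝ × ℝ) = d1 • ((1:ℝ),(0:ℝ)) := by simp [Prod.ext_iff]
    rw [h1, map_smul, hu₁₁def]
    simp [smul_eq_mul]
  have hA : ∀ ξ τ : ℝ, HasDerivAt (fun z => u z τ) (u₁ (ξ,τ)) ξ := by
    intro ξ τ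
    have := (hdF (ξ,τ)).hasFDerivAt.comp_hasDerivAt ξ
      ((hasDerivAt_id ξ).prodMk (hasDerivAt_const ξ τ))
    simpa [hlin, Function.comp_def] using this
  have hB : ∀ ξ τ : ℝ, HasDerivAt (u ξ) (u₂ (ξ,τ)) τ := by
    intro ξ τ
    have := (hdF (ξ,τ)).hasFDerivAt.comp_hasDerivAt τ
      ((hasDerivAt_const τ ξ).prodMk (hasDerivAt_id τ))
    simpa [hlin, Function.comp_def] using this
  have hAder : ∀ τ : ℝ, (fun y => deriv (fun z => u z τ) y) = fun y => u₁ (y, τ) :=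
    fun τ => funext fun y => (hA y τ).deriv
  have hA1 : ∀ ξ τ : ℝ, HasDerivAt (fun y => u₁ (y, τ)) (u₁₁ (ξ,τ)) ξ := by
    intro ξ τ
    have := ((hu₁s.differentiable (by simp)) (ξ,τ)).hasFDerivAt.comp_hasDerivAt ξ
      ((hasDerivAt_id ξ).prodMk (hasDerivAt_const ξ τ))
    simpa [hlin1, Function.comp_def] using this
  have hu2eq : ∀ ξ τ : ℝ, u₂ (ξ,τ) = u₁₁ (ξ,τ) + u ξ τ * P ξ τ := by
    intro ξ τ
    have h := huP ξ τ
    rwa [(hB ξ τ).deriv, hAder τ, (hA1 ξ τ).deriv] at h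
  -- x-direction derivatives
  have hSx : ∀ y : ℝ, HasDerivAt (fun z => α t * z ^ 2 + δ t * z + κ t)
      (2 * α t * y + δ t) y := by
    intro y
    have h1 : HasDerivAt (fun z : ℝ => α t * z ^ 2 + δ t * z + κ t)
        (α t * (↑2 * y ^ 1) + δ t * 1) y :=
      (((hasDerivAt_pow 2 y).const_mul (α t)).add
        ((hasDerivAt_id y).const_mul (δ t))).add_const (κ t)
    convert h1 using 1
    ring
  have hcompx : ∀ y : ℝ, HasDerivAt (fun z => u (β t * z + ε t) (γ t))
      (β t * u₁ (β t * y + ε t, γ t)) y := by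
    intro y
    have hl : HasDerivAt (fun z : ℝ => (β t * z + ε t, γ t)) ((β t, 0) : ℝ × ℝ) y := by
      have := (((hasDerivAt_id y).const_mul (β t)).add_const (ε t)).prodMk
        (hasDerivAt_const y (γ t))
      simpa using this
    have := (hdF _).hasFDerivAt.comp_hasDerivAt y hl
    rw [hlin] at this
    simpa [Function.comp_def] using this
  have hu₁compx : ∀ y : ℝ, HasDerivAt (fun z => u₁ (β t * z + ε t, γ t))
      (β t * u₁₁ (β t * y + ε t, γ t)) y := by
    intro y
    have hl : HasDerivAt (fun z : ℝ => (β t * z + ε t, γ t)) ((β t, 0) : ℝ × ℝ) y := by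
      have := (((hasDerivAt_id y).const_mul (β t)).add_const (ε t)).prodMk
        (hasDerivAt_const y (γ t))
      simpa using this
    have := ((hu₁s.differentiable (by simp)) _).hasFDerivAt.comp_hasDerivAt y hl
    rw [hlin1] at this
    exact this
  have hψx : ∀ y : ℝ, HasDerivAt (fun z => (μ t) ^ (-(1:ℝ)/2) *
      Real.exp (α t * z ^ 2 + δ t * z + κ t) * u (β t * z + ε t) (γ t))
      ((μ t) ^ (-(1:ℝ)/2) * Real.exp (α t * y ^ 2 + δ t * y + κ t) *
        ((2 * α t * y + δ t) * u (β t * y + ε t) (γ t) +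
          β t * u₁ (β t * y + ε t, γ t))) y := by
    intro y
    have h1 := (((hSx y).exp).const_mul ((μ t) ^ (-(1:ℝ)/2))).mul (hcompx y)
    exact h1.congr_deriv (by ring)
  have hd1 : (fun y => deriv (fun z => (μ t) ^ (-(1:ℝ)/2) *
      Real.exp (α t * z ^ 2 + δ t * z + κ t) * u (β t * z + ε t) (γ t)) y) =
      fun y => (μ t) ^ (-(1:ℝ)/2) * Real.exp (α t * y ^ 2 + δ t * y + κ t) *
        ((2 * α t * y + δ t) * u (β t * y + ε t) (γ t) +
          β t * u₁ (β t * y + ε t, γ t)) :=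
    funext fun y => (hψx y).deriv
  have hlinx : HasDerivAt (fun z : ℝ => 2 * α t * z + δ t) (2 * α t) x := by
    have := ((hasDerivAt_id x).const_mul (2 * α t)).add_const (δ t)
    simpa using this
  have hψxx : HasDerivAt (fun y => (μ t) ^ (-(1:ℝ)/2) *
      Real.exp (α t * y ^ 2 + δ t * y + κ t) *
        ((2 * α t * y + δ t) * u (β t * y + ε t) (γ t) +
          β t * u₁ (β t * y + ε t, γ t)))
      ((μ t) ^ (-(1:ℝ)/2) * Real.exp (α t * x ^ 2 + δ t * x + κ t) *
        ((2 * α t * x + δ t) ^ 2 * u (β t * x + ε t) (γ t) +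
          2 * α t * u (β t * x + ε t) (γ t) +
          2 * (2 * α t * x + δ t) * β t * u₁ (β t * x + ε t, γ t) +
          β t ^ 2 * u₁₁ (β t * x + ε t, γ t))) x := by
    have h1 := (((hSx x).exp).const_mul ((μ t) ^ (-(1:ℝ)/2))).mul
      ((hlinx.mul (hcompx x)).add ((hu₁compx x).const_mul (β t)))
    exact h1.congr_deriv (by simp only [Pi.mul_apply, Pi.add_apply]; ring)
  -- t-direction derivative
  have hSt : HasDerivAt (fun s => α s * x ^ 2 + δ s * x + κ s)
      (deriv α t * x ^ 2 + deriv δ t * x + deriv κ t) t :=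
    (((hαs.differentiable (by simp) t).hasDerivAt.mul_const (x ^ 2)).add
      ((hδs.differentiable (by simp) t).hasDerivAt.mul_const x)).add
      (hκs.differentiable (by simp) t).hasDerivAt
  have hMt : HasDerivAt (fun s => (μ s) ^ (-(1:ℝ)/2))
      (deriv μ t * (-(1:ℝ)/2) * μ t ^ (-(1:ℝ)/2 - 1)) t :=
    ((hμs.differentiable (by simp) t).hasDerivAt).rpow_const (Or.inl (hμpos t).ne')
  have hut : HasDerivAt (fun s => u (β s * x + ε s) (γ s))
      ((deriv β t * x + deriv ε t) * u₁ (β t * x + ε t, γ t) +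
        deriv γ t * u₂ (β t * x + ε t, γ t)) t := by
    have hl : HasDerivAt (fun s : ℝ => (β s * x + ε s, γ s))
        ((deriv β t * x + deriv ε t, deriv γ t) : ℝ × ℝ) t :=
      (((hβs.differentiable (by simp) t).hasDerivAt.mul_const x).add
        (hεs.differentiable (by simp) t).hasDerivAt).prodMk
        (hγs.differentiable (by simp) t).hasDerivAt
    have := (hdF _).hasFDerivAt.comp_hasDerivAt t hl
    rw [hlin] at this
    exact this
  have hψt : HasDerivAt (fun s => (μ s) ^ (-(1:ℝ)/2) *
      Real.exp (α s * x ^ 2 + δ s * x + κ s) * u (β s * x + ε s) (γ s))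
      ((deriv μ t * (-(1:ℝ)/2) * μ t ^ (-(1:ℝ)/2 - 1) *
          Real.exp (α t * x ^ 2 + δ t * x + κ t) +
        (μ t) ^ (-(1:ℝ)/2) * (Real.exp (α t * x ^ 2 + δ t * x + κ t) *
          (deriv α t * x ^ 2 + deriv δ t * x + deriv κ t))) *
          u (β t * x + ε t) (γ t) +
        (μ t) ^ (-(1:ℝ)/2) * Real.exp (α t * x ^ 2 + δ t * x + κ t) *
          ((deriv β t * x + deriv ε t) * u₁ (β t * x + ε t, γ t) +
            deriv γ t * u₂ (β t * x + ε t, γ t))) t :=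
    (hMt.mul hSt.exp).mul hut
  rw [hψt.deriv, hd1, hψxx.deriv, (hψx x).deriv]
  have hα' : deriv α t = 2 * c t * α t + 4 * a t * (α t) ^ 2 - b t := by
    have := hα t; linarith
  have hδ' : deriv δ t = (c t + 4 * a t * α t) * δ t + f t - 2 * α t * g t := by
    have := hδ t; linarith
  have hμ' : deriv μ t = (-(4 * a t * α t) - 2 * d t) * μ t :=
    (div_eq_iff (hμpos t).ne').mp (hμ t)
  have hMM : μ t * μ t ^ (-(1:ℝ)/2 - 1) = μ t ^ (-(1:ℝ)/2) := by
    rw [Real.rpow_sub (hμpos t), Real.rpow_one, mul_comm]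
    exact div_mul_cancel₀ _ (hμpos t).ne'
  rw [hα', hδ', hμ', hβ t, hγ t, hε t, hκ t, hu2eq]
  linear_combination ((2 * a t * α t + d t) * Real.exp (α t * x ^ 2 + δ t * x + κ t) *
    u (β t * x + ε t) (γ t)) * hMM


theorem stmt6
    (a b c d f g α β γ δ ε κ μ : ℝ → ℝ)
    (a₁ a₂ b₁ b₂ c₁ c₂ : ℝ) (u v ψ φ : ℝ → ℝ → ℝ)
    (hμpos : ∀ t, 0 < μ t)
    (hsmooth : ContDiff ℝ (⊤ : ℕ∞) α ∧ ContDiff ℝ (⊤ : ℕ∞) β ∧ ContDiff ℝ (⊤ : ℕ∞) γ ∧ ContDiff ℝ (⊤ : ℕ∞) δ ∧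
      ContDiff ℝ (⊤ : ℕ∞) ε ∧ ContDiff ℝ (⊤ : ℕ∞) κ ∧ ContDiff ℝ (⊤ : ℕ∞) μ ∧
      ContDiff ℝ (⊤ : ℕ∞) (Function.uncurry u) ∧ ContDiff ℝ (⊤ : ℕ∞) (Function.uncurry v))
    (hα : ∀ t, deriv α t + b t = 2 * c t * α t + 4 * a t * (α t) ^ 2)
    (hβ : ∀ t, deriv β t = (c t + 4 * a t * α t) * β t)
    (hγ : ∀ t, deriv γ t = a t * (β t) ^ 2)
    (hδ : ∀ t, deriv δ t + 2 * α t * g t = (c t + 4 * a t * α t) * δ t + f t)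
    (hε : ∀ t, deriv ε t = (2 * a t * δ t - g t) * β t)
    (hκ : ∀ t, deriv κ t = a t * (δ t) ^ 2 - g t * δ t)
    (hμ : ∀ t, deriv μ t / μ t = -(4 * a t * α t) - 2 * d t)
    (hu : ∀ ξ τ : ℝ, deriv (u ξ) τ =
      deriv (fun y => deriv (fun z => u z τ) y) ξ +
        u ξ τ * (a₁ - b₁ * u ξ τ - c₁ * v ξ τ))
    (hv : ∀ ξ τ : ℝ, deriv (v ξ) τ =
      deriv (fun y => deriv (fun z => v z τ) y) ξ +
        v ξ τ * (a₂ - b₂ * u ξ τ - c₂ * v ξ τ))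
    (hψ : ψ = fun x t => (μ t) ^ (-(1 : ℝ) / 2) *
      Real.exp (α t * x ^ 2 + δ t * x + κ t) * u (β t * x + ε t) (γ t))
    (hφ : φ = fun x t => (μ t) ^ (-(1 : ℝ) / 2) *
      Real.exp (α t * x ^ 2 + δ t * x + κ t) * v (β t * x + ε t) (γ t)) :
    (∀ x t : ℝ, deriv (ψ x) t =
      a t * deriv (fun y => deriv (fun z => ψ z t) y) x
        - (b t * x ^ 2 - d t - a₁ * a t * (β t) ^ 2 - x * f t) * ψ x t
        - (g t - c t * x) * deriv (fun y => ψ y t) x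
        + ((-b₁ * a t * (β t) ^ 2 * (μ t) ^ ((1 : ℝ) / 2) *
              Real.exp (-(α t * x ^ 2 + δ t * x + κ t))) * ψ x t +
           (-c₁ * a t * (β t) ^ 2 * (μ t) ^ ((1 : ℝ) / 2) *
              Real.exp (-(α t * x ^ 2 + δ t * x + κ t))) * φ x t) * ψ x t) ∧
    (∀ x t : ℝ, deriv (φ x) t =
      a t * deriv (fun y => deriv (fun z => φ z t) y) x
        - (b t * x ^ 2 - d t - a₂ * a t * (β t) ^ 2 - x * f t) * φ x t
        - (g t - c t * x) * deriv (fun y => φ y t) x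
        + ((-b₂ * a t * (β t) ^ 2 * (μ t) ^ ((1 : ℝ) / 2) *
              Real.exp (-(α t * x ^ 2 + δ t * x + κ t))) * ψ x t +
           (-c₂ * a t * (β t) ^ 2 * (μ t) ^ ((1 : ℝ) / 2) *
              Real.exp (-(α t * x ^ 2 + δ t * x + κ t))) * φ x t) * φ x t) := by
  obtain ⟨hαs, hβs, hγs, hδs, hεs, hκs, hμs, hus, hvs⟩ := hsmooth
  subst hψ hφ
  constructor <;> intro x t <;> beta_reduce
  · have hcancel : ∀ C w0 : ℝ,
        (C * μ t ^ ((1:ℝ)/2) * Real.exp (-(α t * x ^ 2 + δ t * x + κ t))) *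
          (μ t ^ (-(1:ℝ)/2) * Real.exp (α t * x ^ 2 + δ t * x + κ t) * w0) = C * w0 := by
      intro C w0
      have h1 : μ t ^ ((1:ℝ)/2) * μ t ^ (-(1:ℝ)/2) = 1 := by
        rw [← Real.rpow_add (hμpos t)]; norm_num
      have h2 : Real.exp (-(α t * x ^ 2 + δ t * x + κ t)) *
          Real.exp (α t * x ^ 2 + δ t * x + κ t) = 1 := by
        have h0 : -(α t * x ^ 2 + δ t * x + κ t) + (α t * x ^ 2 + δ t * x + κ t) = 0 := by
          ring
        rw [← Real.exp_add, h0, Real.exp_zero]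
      calc (C * μ t ^ ((1:ℝ)/2) * Real.exp (-(α t * x ^ 2 + δ t * x + κ t))) *
            (μ t ^ (-(1:ℝ)/2) * Real.exp (α t * x ^ 2 + δ t * x + κ t) * w0)
          = C * ((μ t ^ ((1:ℝ)/2) * μ t ^ (-(1:ℝ)/2)) *
              (Real.exp (-(α t * x ^ 2 + δ t * x + κ t)) *
                Real.exp (α t * x ^ 2 + δ t * x + κ t))) * w0 := by ring
        _ = C * w0 := by rw [h1, h2]; ring
    have hkey := key6 a b c d f g α β γ δ ε κ μ u
      (fun ξ τ => a₁ - b₁ * u ξ τ - c₁ * v ξ τ) hμpos hαs hβs hγs hδs hεs hκs hμs hus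
      hα hβ hγ hδ hε hκ hμ hu x t
    rw [hcancel (-b₁ * a t * β t ^ 2) (u (β t * x + ε t) (γ t)),
      hcancel (-c₁ * a t * β t ^ 2) (v (β t * x + ε t) (γ t)), hkey]
    ring
  · have hcancel : ∀ C w0 : ℝ,
        (C * μ t ^ ((1:ℝ)/2) * Real.exp (-(α t * x ^ 2 + δ t * x + κ t))) *
          (μ t ^ (-(1:ℝ)/2) * Real.exp (α t * x ^ 2 + δ t * x + κ t) * w0) = C * w0 := by
      intro C w0
      have h1 : μ t ^ ((1:ℝ)/2) * μ t ^ (-(1:ℝ)/2) = 1 := by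
        rw [← Real.rpow_add (hμpos t)]; norm_num
      have h2 : Real.exp (-(α t * x ^ 2 + δ t * x + κ t)) *
          Real.exp (α t * x ^ 2 + δ t * x + κ t) = 1 := by
        have h0 : -(α t * x ^ 2 + δ t * x + κ t) + (α t * x ^ 2 + δ t * x + κ t) = 0 := by
          ring
        rw [← Real.exp_add, h0, Real.exp_zero]
      calc (C * μ t ^ ((1:ℝ)/2) * Real.exp (-(α t * x ^ 2 + δ t * x + κ t))) *
            (μ t ^ (-(1:ℝ)/2) * Real.exp (α t * x ^ 2 + δ t * x + κ t) * w0)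
          = C * ((μ t ^ ((1:ℝ)/2) * μ t ^ (-(1:ℝ)/2)) *
              (Real.exp (-(α t * x ^ 2 + δ t * x + κ t)) *
                Real.exp (α t * x ^ 2 + δ t * x + κ t))) * w0 := by ring
        _ = C * w0 := by rw [h1, h2]; ring
    have hkey := key6 a b c d f g α β γ δ ε κ μ v
      (fun ξ τ => a₂ - b₂ * u ξ τ - c₂ * v ξ τ) hμpos hαs hβs hγs hδs hεs hκs hμs hvs
      hα hβ hγ hδ hε hκ hμ hv x t
    rw [hcancel (-b₂ * a t * β t ^ 2) (u (β t * x + ε t) (γ t)),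
      hcancel (-c₂ * a t * β t ^ 2) (v (β t * x + ε t) (γ t)), hkey]
    ring
end

section
/- For b₁ ∈ (0, 1/4), set θ = √2·(1 − 3√(1−4b₁))/4, k = √(1 + √(1−4b₁) − 2b₁)/4, and m = √(2 + 2√(1−4b₁) − 4b₁)/4. Then u(ξ,τ) = (3 − √(1−4b₁))/4 − m·tanh(k(ξ − θτ)) and v(ξ,τ) = (1 + √(1−4b₁))/4 + m·tanh(k(ξ − θτ)) satisfy the Gray-Scott system u_τ = u_{ξξ} − uv² + b₁(1−u) and v_τ = v_{ξξ} + uv² − b₁v on ℝ². -/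
/-!
Since `u + v = 1`, the system collapses to the single equation `v_τ = v_ξξ + (1 - v) v² - b₁ v`.
With `a = (1 + √(1 - 4b₁))/4` one has `m = a` and `k = a/√2`, so `v(ξ, τ) = W(ξ - θτ)` for the front
`W(x) = a (1 + tanh (k x))`, and the equation becomes the travelling-wave ODE
`-θ W' = W'' + (1 - W) W² - b₁ W`. As `tanh' = 1 - tanh²`, both sides of this ODE are cubic
polynomials in `tanh (k x)`, and they agree because `2k² = a²`, `kθ = a(1 - 3a)`, `b₁ = 2a(1 - 2a)`.
-/

open Real

theorem Real.hasDerivAt_tanh (x : ℝ) : HasDerivAt tanh (1 - tanh x ^ 2) x := by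
  have h := (hasDerivAt_sinh x).fun_div (hasDerivAt_cosh x) (cosh_pos x).ne'
  simp_rw [← tanh_eq_sinh_div_cosh] at h
  refine h.congr_deriv ?_
  rw [tanh_eq_sinh_div_cosh]
  field_simp

theorem Real.hasDerivAt_tanh_const_mul (k x : ℝ) :
    HasDerivAt (fun x => tanh (k * x)) (k * (1 - tanh (k * x) ^ 2)) x := by
  have := (hasDerivAt_tanh (k * x)).comp x ((hasDerivAt_id x).const_mul k)
  rwa [mul_one, mul_comm] at this

theorem deriv_comp_const_sub_mul (W : ℝ → ℝ) (ξ θ τ : ℝ) :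
    deriv (fun τ => W (ξ - θ * τ)) τ = -θ * deriv W (ξ - θ * τ) := by
  rw [deriv_comp_mul_left θ (fun y => W (ξ - y)) τ, deriv_comp_const_sub, smul_eq_mul]
  ring

theorem deriv_deriv_comp_sub_const (W : ℝ → ℝ) (c ξ : ℝ) :
    deriv (fun y => deriv (fun z => W (z - c)) y) ξ = deriv (deriv W) (ξ - c) := by
  simp_rw [deriv_comp_sub_const]

noncomputable def kink (a k x : ℝ) : ℝ := a * (1 + tanh (k * x))

section Kink

variable (a k : ℝ)

theorem deriv_kink : deriv (kink a k) = fun x => a * k * (1 - tanh (k * x) ^ 2) := by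
  funext x
  have := ((hasDerivAt_tanh_const_mul k x).const_add 1).const_mul a
  rw [show kink a k = fun y => a * (1 + tanh (k * y)) from rfl, this.deriv]
  ring

theorem deriv_deriv_kink (x : ℝ) :
    deriv (deriv (kink a k)) x = -2 * a * k ^ 2 * tanh (k * x) * (1 - tanh (k * x) ^ 2) := by
  have := (((hasDerivAt_tanh_const_mul k x).fun_pow 2).const_sub 1).const_mul (a * k)
  rw [deriv_kink, this.deriv]
  ring

theorem kink_travellingWave_ode {b θ : ℝ} (hk : 2 * k ^ 2 = a ^ 2)
    (hθ : k * θ = a * (1 - 3 * a)) (hb : b = 2 * a * (1 - 2 * a)) (x : ℝ) :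
    -θ * deriv (kink a k) x =
      deriv (deriv (kink a k)) x + (1 - kink a k x) * kink a k x ^ 2 - b * kink a k x := by
  rw [deriv_deriv_kink, deriv_kink, kink, hb]
  -- `hk` matches the odd powers of `tanh (k x)`, `hθ` the even ones.
  linear_combination (-a * (1 - tanh (k * x) ^ 2)) * hθ +
    (a * tanh (k * x) * (1 - tanh (k * x) ^ 2)) * hk

end Kink

theorem grayScott_of_add_eq_one {b : ℝ} {u v : ℝ → ℝ → ℝ} (huv : ∀ ξ τ, u ξ τ + v ξ τ = 1)
    (hv : ∀ ξ τ, deriv (v ξ) τ =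
      deriv (fun y => deriv (fun z => v z τ) y) ξ + u ξ τ * v ξ τ ^ 2 - b * v ξ τ) :
    (∀ ξ τ : ℝ, deriv (u ξ) τ =
      deriv (fun y => deriv (fun z => u z τ) y) ξ - u ξ τ * (v ξ τ) ^ 2 + b * (1 - u ξ τ)) ∧
    (∀ ξ τ : ℝ, deriv (v ξ) τ =
      deriv (fun y => deriv (fun z => v z τ) y) ξ + u ξ τ * (v ξ τ) ^ 2 - b * v ξ τ) := by
  obtain rfl : u = fun ξ τ => 1 - v ξ τ := funext₂ fun ξ τ => eq_sub_of_add_eq (huv ξ τ)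
  refine ⟨fun ξ τ => ?_, hv⟩
  simp_rw [deriv_const_sub, deriv.fun_neg, hv]
  ring

theorem stmt8_general (b₁ : ℝ) (hb₁' : b₁ < 1 / 4)
    (θ k m : ℝ)
    (hθ : θ = Real.sqrt 2 * (1 - 3 * Real.sqrt (1 - 4 * b₁)) / 4)
    (hk : k = Real.sqrt (1 + Real.sqrt (1 - 4 * b₁) - 2 * b₁) / 4)
    (hm : m = Real.sqrt (2 + 2 * Real.sqrt (1 - 4 * b₁) - 4 * b₁) / 4)
    (u v : ℝ → ℝ → ℝ)
    (hu : u = fun ξ τ => (3 - Real.sqrt (1 - 4 * b₁)) / 4 - m * Real.tanh (k * (ξ - θ * τ)))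
    (hv : v = fun ξ τ => (1 + Real.sqrt (1 - 4 * b₁)) / 4 + m * Real.tanh (k * (ξ - θ * τ))) :
    (∀ ξ τ : ℝ, deriv (u ξ) τ =
      deriv (fun y => deriv (fun z => u z τ) y) ξ - u ξ τ * (v ξ τ) ^ 2 + b₁ * (1 - u ξ τ)) ∧
    (∀ ξ τ : ℝ, deriv (v ξ) τ =
      deriv (fun y => deriv (fun z => v z τ) y) ξ + u ξ τ * (v ξ τ) ^ 2 - b₁ * v ξ τ) := by
  set s := √(1 - 4 * b₁)
  have hs : s ^ 2 = 1 - 4 * b₁ := sq_sqrt (by linarith)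
  set a := (1 + s) / 4 with ha
  have hma : m = a := by
    rw [hm, show 2 + 2 * s - 4 * b₁ = (1 + s) ^ 2 by linear_combination -hs,
      sqrt_sq (by positivity)]
  have hmk : m = √2 * k := by
    rw [hm, hk, ← mul_div_assoc, ← sqrt_mul zero_le_two]
    ring_nf
  have hk2 : 2 * k ^ 2 = a ^ 2 := by rw [← hma, hmk, mul_pow, sq_sqrt zero_le_two]
  have hkθ : k * θ = a * (1 - 3 * a) := by
    rw [hθ]
    linear_combination (1 - 3 * s) / 4 * (hma - hmk) - 3 / 4 * a * ha
  have hb : b₁ = 2 * a * (1 - 2 * a) := by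
    rw [ha]
    linear_combination hs / 4
  have hv_kink : v = fun ξ τ => kink a k (ξ - θ * τ) := by
    funext ξ τ
    rw [hv, hma, kink]
    ring
  refine grayScott_of_add_eq_one (fun ξ τ => by rw [hu, hv]; ring) fun ξ τ => ?_
  have hu_kink : u ξ τ = 1 - kink a k (ξ - θ * τ) := by rw [hu, hma, kink]; ring
  rw [hu_kink, hv_kink, deriv_comp_const_sub_mul, deriv_deriv_comp_sub_const]
  exact kink_travellingWave_ode a k hk2 hkθ hb (ξ - θ * τ)

theorem stmt8 (b₁ : ℝ) (hb₁ : 0 < b₁) (hb₁' : b₁ < 1 / 4)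
    (θ k m : ℝ)
    (hθ : θ = Real.sqrt 2 * (1 - 3 * Real.sqrt (1 - 4 * b₁)) / 4)
    (hk : k = Real.sqrt (1 + Real.sqrt (1 - 4 * b₁) - 2 * b₁) / 4)
    (hm : m = Real.sqrt (2 + 2 * Real.sqrt (1 - 4 * b₁) - 4 * b₁) / 4)
    (u v : ℝ → ℝ → ℝ)
    (hu : u = fun ξ τ => (3 - Real.sqrt (1 - 4 * b₁)) / 4 - m * Real.tanh (k * (ξ - θ * τ)))
    (hv : v = fun ξ τ => (1 + Real.sqrt (1 - 4 * b₁)) / 4 + m * Real.tanh (k * (ξ - θ * τ))) :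
    (∀ ξ τ : ℝ, deriv (u ξ) τ =
      deriv (fun y => deriv (fun z => u z τ) y) ξ - u ξ τ * (v ξ τ) ^ 2 + b₁ * (1 - u ξ τ)) ∧
    (∀ ξ τ : ℝ, deriv (v ξ) τ =
      deriv (fun y => deriv (fun z => v z τ) y) ξ + u ξ τ * (v ξ τ) ^ 2 - b₁ * v ξ τ) :=
  stmt8_general b₁ hb₁' θ k m hθ hk hm u v hu hv
end

section
/- Suppose the functions α, β, γ, δ, ε, κ₁, κ₂, μ (of t, with μ > 0) satisfy the modified Riccati system: α' + b = 2cα + 4aα², β' = (c+4aα)β, γ' = aβ², δ' + 2αg = (c+4aα)δ + f, ε' = (2aδ−g)β, κ₁' = aδ² − gδ + h·e^{κ₂}, κ₂' = −h·e^{κ₂}, and μ'/μ = −4aα − 2d. Then for any fixed real parameter y, the functions ψ(x,t) = μ^{−1/2}e^{αx² + βxy + γy² + δx + εy + κ₁} and φ(x,t) = μ^{−1/2}e^{αx² + βxy + γy² + δx + εy + κ₁ + κ₂} satisfy ψ_t = aψ_{xx} − (bx² − d − xf)ψ − (g − cx)ψ_x + hφ and φ_t = aφ_{xx} − (bx² −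 d − xf)φ − (g − cx)φ_x. -/
/-!
Write `ψ = μ^{-1/2} e^Q` with `Q` quadratic in `x`. Then `ψ_x = Q_x ψ` and
`ψ_xx = (Q_x² + Q_xx) ψ`, so after dividing by `ψ` both sides of the equation are polynomials
in `x` and `y`; comparing the coefficients of `x², xy, y², x, y, 1` gives exactly the equations
for `α, β, γ, δ, ε, κ₁` and `μ'/μ`, the source `h e^{κ₂} ψ = h φ` being carried by `κ₁`.
For `φ` the exponent contains `κ₁ + κ₂` instead, and `κ₂' = -h e^{κ₂}` cancels that source.
-/

open Real

noncomputable def gaussianAnsatz (A B G D E K M : ℝ → ℝ) (y x t : ℝ) : ℝ :=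
  M t ^ (-(1 : ℝ) / 2) *
    exp (A t * x ^ 2 + B t * x * y + G t * y ^ 2 + D t * x + E t * y + K t)

section GaussianAnsatz

variable (A B G D E K M : ℝ → ℝ) (y : ℝ)

theorem hasDerivAt_gaussianAnsatz_space (x t : ℝ) :
    HasDerivAt (fun w => gaussianAnsatz A B G D E K M y w t)
      (gaussianAnsatz A B G D E K M y x t * (2 * A t * x + B t * y + D t)) x := by
  have hQ : HasDerivAt
      (fun w => A t * w ^ 2 + B t * w * y + G t * y ^ 2 + D t * w + E t * y + K t)
      (2 * A t * x + B t * y + D t) x := by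
    have := (((((hasDerivAt_pow 2 x).const_mul (A t)).add
      (((hasDerivAt_id x).const_mul (B t)).mul_const y)).add_const (G t * y ^ 2)).add
      ((hasDerivAt_id x).const_mul (D t))).add_const (E t * y + K t)
    exact (this.congr_deriv (by norm_num; ring)).congr_of_eventuallyEq
      (.of_forall fun w => by simp only [Pi.add_apply, id]; ring)
  exact (hQ.exp.const_mul _).congr_deriv (by rw [gaussianAnsatz]; ring)

theorem deriv_deriv_gaussianAnsatz_space (x t : ℝ) :
    deriv (fun w => deriv (fun z => gaussianAnsatz A B G D E K M y z t) w) x =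
      gaussianAnsatz A B G D E K M y x t * ((2 * A t * x + B t * y + D t) ^ 2 + 2 * A t) := by
  have hfirst : deriv (fun z => gaussianAnsatz A B G D E K M y z t) =
      fun w => gaussianAnsatz A B G D E K M y w t * (2 * A t * w + B t * y + D t) :=
    funext fun w => (hasDerivAt_gaussianAnsatz_space A B G D E K M y w t).deriv
  have hlin : HasDerivAt (fun w => 2 * A t * w + B t * y + D t) (2 * A t) x := by
    simpa using ((hasDerivAt_id x).const_mul (2 * A t)).add_const (B t * y + D t)
  rw [hfirst]
  exact ((hasDerivAt_gaussianAnsatz_space A B G D E K M y x t).mul hlin).deriv.trans (by ring)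

theorem hasDerivAt_gaussianAnsatz_time {t : ℝ} (hA : DifferentiableAt ℝ A t)
    (hB : DifferentiableAt ℝ B t) (hG : DifferentiableAt ℝ G t) (hD : DifferentiableAt ℝ D t)
    (hE : DifferentiableAt ℝ E t) (hK : DifferentiableAt ℝ K t) (hM : DifferentiableAt ℝ M t)
    (hM₀ : M t ≠ 0) (x : ℝ) :
    HasDerivAt (gaussianAnsatz A B G D E K M y x)
      (gaussianAnsatz A B G D E K M y x t * (-(deriv M t / M t) / 2 + deriv A t * x ^ 2
        + deriv B t * x * y + deriv G t * y ^ 2 + deriv D t * x + deriv E t * y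
        + deriv K t)) t := by
  have hpow : HasDerivAt (fun s => M s ^ (-(1 : ℝ) / 2))
      (-(1 : ℝ) / 2 * M t ^ (-(1 : ℝ) / 2 - 1) * deriv M t) t :=
    (hasDerivAt_rpow_const (Or.inl hM₀)).comp t hM.hasDerivAt
  have hQ : HasDerivAt
      (fun s => A s * x ^ 2 + B s * x * y + G s * y ^ 2 + D s * x + E s * y + K s)
      (deriv A t * x ^ 2 + deriv B t * x * y + deriv G t * y ^ 2 + deriv D t * x
        + deriv E t * y + deriv K t) t :=
    (((((hA.hasDerivAt.mul_const (x ^ 2)).add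
      ((hB.hasDerivAt.mul_const x).mul_const y)).add (hG.hasDerivAt.mul_const (y ^ 2))).add
      (hD.hasDerivAt.mul_const x)).add (hE.hasDerivAt.mul_const y)).add hK.hasDerivAt
  refine (hpow.mul hQ.exp).congr_deriv ?_
  rw [gaussianAnsatz, rpow_sub_one hM₀]
  field_simp
  ring

theorem gaussianAnsatz_solves (a b c d f g s : ℝ → ℝ) {t : ℝ} (hA : DifferentiableAt ℝ A t)
    (hB : DifferentiableAt ℝ B t) (hG : DifferentiableAt ℝ G t) (hD : DifferentiableAt ℝ D t)
    (hE : DifferentiableAt ℝ E t) (hK : DifferentiableAt ℝ K t) (hM : DifferentiableAt ℝ M t)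
    (hM₀ : M t ≠ 0)
    (hA' : deriv A t + b t = 2 * c t * A t + 4 * a t * A t ^ 2)
    (hB' : deriv B t = (c t + 4 * a t * A t) * B t)
    (hG' : deriv G t = a t * B t ^ 2)
    (hD' : deriv D t + 2 * A t * g t = (c t + 4 * a t * A t) * D t + f t)
    (hE' : deriv E t = (2 * a t * D t - g t) * B t)
    (hK' : deriv K t = a t * D t ^ 2 - g t * D t + s t)
    (hM' : deriv M t / M t = -(4 * a t * A t) - 2 * d t) (x : ℝ) :
    deriv (gaussianAnsatz A B G D E K M y x) t =
      a t * deriv (fun w => deriv (fun z => gaussianAnsatz A B G D E K M y z t) w) x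
        - (b t * x ^ 2 - d t - x * f t) * gaussianAnsatz A B G D E K M y x t
        - (g t - c t * x) * deriv (fun w => gaussianAnsatz A B G D E K M y w t) x
        + s t * gaussianAnsatz A B G D E K M y x t := by
  rw [(hasDerivAt_gaussianAnsatz_time A B G D E K M y hA hB hG hD hE hK hM hM₀ x).deriv,
    deriv_deriv_gaussianAnsatz_space, (hasDerivAt_gaussianAnsatz_space A B G D E K M y x t).deriv,
    hM', eq_sub_of_add_eq hA', eq_sub_of_add_eq hD', hB', hG', hE', hK']
  ring

end GaussianAnsatz

theorem stmt15_general
    (a b c d f g h : ℝ → ℝ)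
    (α β γ δ ε κ₁ κ₂ μ : ℝ → ℝ)
    (hdiff : Differentiable ℝ α ∧ Differentiable ℝ β ∧ Differentiable ℝ γ ∧
      Differentiable ℝ δ ∧ Differentiable ℝ ε ∧ Differentiable ℝ κ₁ ∧
      Differentiable ℝ κ₂ ∧ Differentiable ℝ μ)
    (hμpos : ∀ t, 0 < μ t)
    (hα : ∀ t, deriv α t + b t = 2 * c t * α t + 4 * a t * (α t) ^ 2)
    (hβ : ∀ t, deriv β t = (c t + 4 * a t * α t) * β t)
    (hγ : ∀ t, deriv γ t = a t * (β t) ^ 2)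
    (hδ : ∀ t, deriv δ t + 2 * α t * g t = (c t + 4 * a t * α t) * δ t + f t)
    (hε : ∀ t, deriv ε t = (2 * a t * δ t - g t) * β t)
    (hκ₁ : ∀ t, deriv κ₁ t = a t * (δ t) ^ 2 - g t * δ t + h t * Real.exp (κ₂ t))
    (hκ₂ : ∀ t, deriv κ₂ t = -h t * Real.exp (κ₂ t))
    (hμ : ∀ t, deriv μ t / μ t = -(4 * a t * α t) - 2 * d t)
    (y : ℝ) (ψ φ : ℝ → ℝ → ℝ)
    (hψ : ψ = fun x t => (μ t) ^ (-(1 : ℝ) / 2) *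
      Real.exp (α t * x ^ 2 + β t * x * y + γ t * y ^ 2 + δ t * x + ε t * y + κ₁ t))
    (hφ : φ = fun x t => (μ t) ^ (-(1 : ℝ) / 2) *
      Real.exp (α t * x ^ 2 + β t * x * y + γ t * y ^ 2 + δ t * x + ε t * y + κ₁ t + κ₂ t)) :
    (∀ x t : ℝ, deriv (ψ x) t =
      a t * deriv (fun w => deriv (fun z => ψ z t) w) x
        - (b t * x ^ 2 - d t - x * f t) * ψ x t
        - (g t - c t * x) * deriv (fun w => ψ w t) x
        + h t * φ x t) ∧
    (∀ x t : ℝ, deriv (φ x) t =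
      a t * deriv (fun w => deriv (fun z => φ z t) w) x
        - (b t * x ^ 2 - d t - x * f t) * φ x t
        - (g t - c t * x) * deriv (fun w => φ w t) x) := by
  obtain ⟨dα, dβ, dγ, dδ, dε, dκ₁, dκ₂, dμ⟩ := hdiff
  replace hψ : ψ = gaussianAnsatz α β γ δ ε κ₁ μ y := hψ
  replace hφ : φ = gaussianAnsatz α β γ δ ε (κ₁ + κ₂) μ y := by
    rw [hφ]; funext x t; simp only [gaussianAnsatz, Pi.add_apply, add_assoc]
  have hφψ : ∀ x t, φ x t = exp (κ₂ t) * ψ x t := by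
    intro x t; rw [hφ, hψ, gaussianAnsatz, gaussianAnsatz, Pi.add_apply, ← add_assoc, exp_add]
    ring
  subst hψ hφ
  constructor
  · intro x t
    rw [hφψ, gaussianAnsatz_solves α β γ δ ε κ₁ μ y a b c d f g (fun t => h t * exp (κ₂ t))
      (dα t) (dβ t) (dγ t) (dδ t) (dε t) (dκ₁ t) (dμ t) (hμpos t).ne'
      (hα t) (hβ t) (hγ t) (hδ t) (hε t) (hκ₁ t) (hμ t) x]
    ring
  · intro x t
    have hκ : deriv (κ₁ + κ₂) t = a t * δ t ^ 2 - g t * δ t + 0 := by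
      rw [deriv_add (dκ₁ t) (dκ₂ t), hκ₁, hκ₂]; ring
    simpa using gaussianAnsatz_solves α β γ δ ε (κ₁ + κ₂) μ y a b c d f g 0
      (dα t) (dβ t) (dγ t) (dδ t) (dε t) ((dκ₁ t).add (dκ₂ t)) (dμ t) (hμpos t).ne'
      (hα t) (hβ t) (hγ t) (hδ t) (hε t) hκ (hμ t) x

theorem stmt15
    (a b c d f g h : ℝ → ℝ)
    (ha : Continuous a) (hb : Continuous b) (hc : Continuous c) (hd : Continuous d)
    (hf : Continuous f) (hgc : Continuous g) (hhc : Continuous h)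
    (α β γ δ ε κ₁ κ₂ μ : ℝ → ℝ)
    (hdiff : Differentiable ℝ α ∧ Differentiable ℝ β ∧ Differentiable ℝ γ ∧
      Differentiable ℝ δ ∧ Differentiable ℝ ε ∧ Differentiable ℝ κ₁ ∧
      Differentiable ℝ κ₂ ∧ Differentiable ℝ μ)
    (hμpos : ∀ t, 0 < μ t)
    (hα : ∀ t, deriv α t + b t = 2 * c t * α t + 4 * a t * (α t) ^ 2)
    (hβ : ∀ t, deriv β t = (c t + 4 * a t * α t) * β t)
    (hγ : ∀ t, deriv γ t = a t * (β t) ^ 2)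
    (hδ : ∀ t, deriv δ t + 2 * α t * g t = (c t + 4 * a t * α t) * δ t + f t)
    (hε : ∀ t, deriv ε t = (2 * a t * δ t - g t) * β t)
    (hκ₁ : ∀ t, deriv κ₁ t = a t * (δ t) ^ 2 - g t * δ t + h t * Real.exp (κ₂ t))
    (hκ₂ : ∀ t, deriv κ₂ t = -h t * Real.exp (κ₂ t))
    (hμ : ∀ t, deriv μ t / μ t = -(4 * a t * α t) - 2 * d t)
    (y : ℝ) (ψ φ : ℝ → ℝ → ℝ)
    (hψ : ψ = fun x t => (μ t) ^ (-(1 : ℝ) / 2) *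
      Real.exp (α t * x ^ 2 + β t * x * y + γ t * y ^ 2 + δ t * x + ε t * y + κ₁ t))
    (hφ : φ = fun x t => (μ t) ^ (-(1 : ℝ) / 2) *
      Real.exp (α t * x ^ 2 + β t * x * y + γ t * y ^ 2 + δ t * x + ε t * y + κ₁ t + κ₂ t)) :
    (∀ x t : ℝ, deriv (ψ x) t =
      a t * deriv (fun w => deriv (fun z => ψ z t) w) x
        - (b t * x ^ 2 - d t - x * f t) * ψ x t
        - (g t - c t * x) * deriv (fun w => ψ w t) x
        + h t * φ x t) ∧
    (∀ x t : ℝ, deriv (φ x) t =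
      a t * deriv (fun w => deriv (fun z => φ z t) w) x
        - (b t * x ^ 2 - d t - x * f t) * φ x t
        - (g t - c t * x) * deriv (fun w => φ w t) x) :=
  stmt15_general a b c d f g h α β γ δ ε κ₁ κ₂ μ hdiff hμpos hα hβ hγ hδ hε hκ₁ hκ₂ hμ y ψ φ hψ hφ
end

section
/- For real b₁ with 0 < b₁ < 1/4, and θ = √2(1 − 3√(1−4b₁))/4, k = √(1 + √(1−4b₁) − 2b₁)/4, m = √(2 + 2√(1−4b₁) − 4b₁)/4, the functions ψ(x,t) = e^{−x² + cos t}·[(3−√(1−4b₁))/4 − m·tanh(k(x−θt))] and φ(x,t) = e^{−x² + cos t}·[(1+√(1−4b₁))/4 + m·tanh(k(x−θt))] satisfy ψ_t = ψ_{xx} + (4x² + 2 − sin t − b₁)ψ + 4xψ_x − e^{2x² − 2cos t}ψφ² + b₁e^{−x² + cos t} and φ_t = φ_{xx} + (4x² + 2 − sin t − b₁)φ + 4xφ_x + e^{2x² − 2cos t}ψφ². -/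
/-!
Write `ψ = E u` and `φ = E v` with the Gaussian weight `E = exp (-x² + cos t)`. The weight is
chosen so that it absorbs the drift and the potential: `ψ_t - ψ_xx - 4x ψ_x - (4x² + 2 - sin t) ψ
= E (u_t - u_xx)`, while `exp (2x² - 2cos t) ψ φ² = E u v²`. The system thus reduces to
`u_t = u_xx + b₁ (1 - u) - u v²`, `v_t = v_xx - b₁ v + u v²`. Since `u + v = 1`, both equations
say that `v` is a travelling front of `v_t = v_xx + v² (1 - v) - b₁ v`, and with
`s = √(1 - 4b₁)` the parameters simplify to `m = (1 + s)/4`, `k² = (1 + s)²/32` and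
`kθ = (1 + s)(1 - 3s)/16`, which make the tanh ansatz an exact solution.
-/

open Real

section TravellingWave

variable (k θ : ℝ)

theorem hasDerivAt_tanh_wave_space (t x : ℝ) :
    HasDerivAt (fun y => tanh (k * (y - θ * t))) (k * (1 - tanh (k * (x - θ * t)) ^ 2)) x := by
  have h := ((hasDerivAt_id' x).sub_const (θ * t)).const_mul k
  exact ((hasDerivAt_tanh _).comp x h).congr_deriv (by ring)

theorem hasDerivAt_tanh_wave_time (x t : ℝ) :
    HasDerivAt (fun s => tanh (k * (x - θ * s)))
      (-θ * (k * (1 - tanh (k * (x - θ * t)) ^ 2))) t := by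
  have h := (((hasDerivAt_id' t).const_mul θ).const_sub x).const_mul k
  exact ((hasDerivAt_tanh _).comp t h).congr_deriv (by ring)

theorem hasDerivAt_sech_sq_wave_space (t x : ℝ) :
    HasDerivAt (fun y => k * (1 - tanh (k * (y - θ * t)) ^ 2))
      (-2 * k ^ 2 * tanh (k * (x - θ * t)) * (1 - tanh (k * (x - θ * t)) ^ 2)) x := by
  refine ((((hasDerivAt_tanh_wave_space k θ t x).pow 2).const_sub 1).const_mul k).congr_deriv ?_
  norm_num
  ring

end TravellingWave

theorem deriv_gaussianWeight_mul_time {f : ℝ → ℝ} {f' : ℝ} (x t : ℝ) (hf : HasDerivAt f f' t) :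
    deriv (fun s => exp (-x ^ 2 + cos s) * f s) t =
      exp (-x ^ 2 + cos t) * (f' - sin t * f t) := by
  have hE := ((hasDerivAt_cos t).const_add (-x ^ 2)).exp
  exact (hE.mul hf).deriv.trans (by ring)

theorem hasDerivAt_gaussianWeight_mul_space {f : ℝ → ℝ} {f' : ℝ} (c x : ℝ)
    (hf : HasDerivAt f f' x) :
    HasDerivAt (fun y => exp (-y ^ 2 + c) * f y) (exp (-x ^ 2 + c) * (f' - 2 * x * f x)) x := by
  have hE := (((hasDerivAt_pow 2 x).neg).add_const c).exp
  refine (hE.mul hf).congr_deriv ?_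
  norm_num
  ring

theorem deriv_deriv_gaussianWeight_mul_add {f f' : ℝ → ℝ} {f'' : ℝ} (c x : ℝ)
    (hf : ∀ y, HasDerivAt f (f' y) y) (hf' : HasDerivAt f' f'' x) :
    deriv (fun y => deriv (fun z => exp (-z ^ 2 + c) * f z) y) x
        + 4 * x * deriv (fun y => exp (-y ^ 2 + c) * f y) x =
      exp (-x ^ 2 + c) * (f'' - (4 * x ^ 2 + 2) * f x) := by
  have hfirst : (fun y => deriv (fun z => exp (-z ^ 2 + c) * f z) y) =
      fun y => exp (-y ^ 2 + c) * (f' y - 2 * y * f y) :=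
    funext fun y => (hasDerivAt_gaussianWeight_mul_space c y (hf y)).deriv
  have hinner : HasDerivAt (fun y => f' y - 2 * y * f y) (f'' - (2 * f x + 2 * x * f' x)) x :=
    (hf'.sub (((hasDerivAt_id' x).const_mul 2).mul (hf x))).congr_deriv (by ring)
  have hsecond := hasDerivAt_gaussianWeight_mul_space c x hinner
  rw [hfirst, hsecond.deriv, (hasDerivAt_gaussianWeight_mul_space c x (hf x)).deriv]
  ring

theorem exp_two_mul_sub_mul_exp_sq (x t : ℝ) :
    exp (2 * x ^ 2 - 2 * cos t) * exp (-x ^ 2 + cos t) ^ 2 = 1 := by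
  rw [← exp_nat_mul, ← exp_add, exp_eq_one_iff]
  push_cast; ring

/-- For `T = tanh (k (x - θ t))`, the front `v = (1 + s)/4 + m T` and `u = 1 - v` satisfy
`v_t - v_xx = u v² - b v`. -/
theorem tanh_front_reaction_identity {b s θ k m : ℝ} (T : ℝ) (hs : 0 ≤ s)
    (hs2 : s ^ 2 = 1 - 4 * b)
    (hθ : θ = √2 * (1 - 3 * s) / 4) (hk : k = √(1 + s - 2 * b) / 4)
    (hm : m = √(2 + 2 * s - 4 * b) / 4) :
    -θ * (m * (k * (1 - T ^ 2))) + m * (2 * k ^ 2 * T * (1 - T ^ 2)) =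
      ((3 - s) / 4 - m * T) * ((1 + s) / 4 + m * T) ^ 2 - b * ((1 + s) / 4 + m * T) := by
  have hsq : 2 + 2 * s - 4 * b = (1 + s) ^ 2 := by linear_combination -hs2
  have hnonneg : 0 ≤ 1 + s - 2 * b := by nlinarith
  have hroot : √(2 + 2 * s - 4 * b) = 1 + s := by
    rw [hsq, sqrt_sq (by linarith)]
  have hkθ : k * θ = (1 + s) * (1 - 3 * s) / 16 := by
    have : √(1 + s - 2 * b) * √2 = 1 + s := by
      rw [← sqrt_mul hnonneg, show (1 + s - 2 * b) * 2 = 2 + 2 * s - 4 * b by ring, hroot]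
    rw [hk, hθ]
    linear_combination (1 - 3 * s) / 16 * this
  have hk2 : k ^ 2 = (1 + s) ^ 2 / 32 := by
    rw [hk, div_pow, sq_sqrt hnonneg]
    linear_combination hsq / 32
  rw [hroot] at hm
  obtain rfl : b = (1 - s ^ 2) / 4 := by linear_combination hs2 / 4
  subst hm
  linear_combination (-(1 + s) * (1 - T ^ 2) / 4) * hkθ + ((1 + s) * T * (1 - T ^ 2) / 2) * hk2

theorem stmt16_general (b₁ : ℝ) (hb₁' : b₁ < 1 / 4)
    (θ k m : ℝ)
    (hθ : θ = Real.sqrt 2 * (1 - 3 * Real.sqrt (1 - 4 * b₁)) / 4)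
    (hk : k = Real.sqrt (1 + Real.sqrt (1 - 4 * b₁) - 2 * b₁) / 4)
    (hm : m = Real.sqrt (2 + 2 * Real.sqrt (1 - 4 * b₁) - 4 * b₁) / 4)
    (ψ φ : ℝ → ℝ → ℝ)
    (hψ : ψ = fun x t => Real.exp (-x ^ 2 + Real.cos t) *
      ((3 - Real.sqrt (1 - 4 * b₁)) / 4 - m * Real.tanh (k * (x - θ * t))))
    (hφ : φ = fun x t => Real.exp (-x ^ 2 + Real.cos t) *
      ((1 + Real.sqrt (1 - 4 * b₁)) / 4 + m * Real.tanh (k * (x - θ * t)))) :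
    (∀ x t : ℝ, deriv (ψ x) t =
      deriv (fun y => deriv (fun z => ψ z t) y) x
        + (4 * x ^ 2 + 2 - Real.sin t - b₁) * ψ x t
        + 4 * x * deriv (fun y => ψ y t) x
        - Real.exp (2 * x ^ 2 - 2 * Real.cos t) * ψ x t * (φ x t) ^ 2
        + b₁ * Real.exp (-x ^ 2 + Real.cos t)) ∧
    (∀ x t : ℝ, deriv (φ x) t =
      deriv (fun y => deriv (fun z => φ z t) y) x
        + (4 * x ^ 2 + 2 - Real.sin t - b₁) * φ x t
        + 4 * x * deriv (fun y => φ y t) x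
        + Real.exp (2 * x ^ 2 - 2 * Real.cos t) * ψ x t * (φ x t) ^ 2) := by
  have hs0 := sqrt_nonneg (1 - 4 * b₁)
  have hs2 : √(1 - 4 * b₁) ^ 2 = 1 - 4 * b₁ := sq_sqrt (by linarith)
  generalize √(1 - 4 * b₁) = s at hs0 hs2 hθ hk hm hψ hφ
  subst hψ hφ
  have hreaction x t :=
    tanh_front_reaction_identity (tanh (k * (x - θ * t))) hs0 hs2 hθ hk hm
  refine ⟨fun x t => ?_, fun x t => ?_⟩
  · rw [deriv_gaussianWeight_mul_time x t
      (((hasDerivAt_tanh_wave_time k θ x t).const_mul m).const_sub _)]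
    have hspace := deriv_deriv_gaussianWeight_mul_add (cos t) x
      (fun y => ((hasDerivAt_tanh_wave_space k θ t y).const_mul m).const_sub ((3 - s) / 4))
      ((hasDerivAt_sech_sq_wave_space k θ t x).const_mul m).neg
    linear_combination -hspace - exp (-x ^ 2 + cos t) * hreaction x t
      + exp (-x ^ 2 + cos t) * ((3 - s) / 4 - m * tanh (k * (x - θ * t)))
        * ((1 + s) / 4 + m * tanh (k * (x - θ * t))) ^ 2 * exp_two_mul_sub_mul_exp_sq x t
  · rw [deriv_gaussianWeight_mul_time x t
      (((hasDerivAt_tanh_wave_time k θ x t).const_mul m).const_add _)]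
    have hspace := deriv_deriv_gaussianWeight_mul_add (cos t) x
      (fun y => ((hasDerivAt_tanh_wave_space k θ t y).const_mul m).const_add ((1 + s) / 4))
      ((hasDerivAt_sech_sq_wave_space k θ t x).const_mul m)
    linear_combination -hspace + exp (-x ^ 2 + cos t) * hreaction x t
      - exp (-x ^ 2 + cos t) * ((3 - s) / 4 - m * tanh (k * (x - θ * t)))
        * ((1 + s) / 4 + m * tanh (k * (x - θ * t))) ^ 2 * exp_two_mul_sub_mul_exp_sq x t

theorem stmt16 (b₁ : ℝ) (hb₁ : 0 < b₁) (hb₁' : b₁ < 1 / 4)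
    (θ k m : ℝ)
    (hθ : θ = Real.sqrt 2 * (1 - 3 * Real.sqrt (1 - 4 * b₁)) / 4)
    (hk : k = Real.sqrt (1 + Real.sqrt (1 - 4 * b₁) - 2 * b₁) / 4)
    (hm : m = Real.sqrt (2 + 2 * Real.sqrt (1 - 4 * b₁) - 4 * b₁) / 4)
    (ψ φ : ℝ → ℝ → ℝ)
    (hψ : ψ = fun x t => Real.exp (-x ^ 2 + Real.cos t) *
      ((3 - Real.sqrt (1 - 4 * b₁)) / 4 - m * Real.tanh (k * (x - θ * t))))
    (hφ : φ = fun x t => Real.exp (-x ^ 2 + Real.cos t) *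
      ((1 + Real.sqrt (1 - 4 * b₁)) / 4 + m * Real.tanh (k * (x - θ * t)))) :
    (∀ x t : ℝ, deriv (ψ x) t =
      deriv (fun y => deriv (fun z => ψ z t) y) x
        + (4 * x ^ 2 + 2 - Real.sin t - b₁) * ψ x t
        + 4 * x * deriv (fun y => ψ y t) x
        - Real.exp (2 * x ^ 2 - 2 * Real.cos t) * ψ x t * (φ x t) ^ 2
        + b₁ * Real.exp (-x ^ 2 + Real.cos t)) ∧
    (∀ x t : ℝ, deriv (φ x) t =
      deriv (fun y => deriv (fun z => φ z t) y) x
        + (4 * x ^ 2 + 2 - Real.sin t - b₁) * φ x t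
        + 4 * x * deriv (fun y => φ y t) x
        + Real.exp (2 * x ^ 2 - 2 * Real.cos t) * ψ x t * (φ x t) ^ 2) :=
  stmt16_general b₁ hb₁' θ k m hθ hk hm ψ φ hψ hφ
end
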